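/- Let I ⊂ ℝ be an open interval and v : (0,∞) × I → S² ⊂ ℝ³ a smooth map. Define u : (ℝ² ∖ {0}) × I → S² by u(x,t) = e^{θR}v(r,t) in polar coordinates x = (r cos θ, r sin θ). Then u satisfies the Schrödinger map equation ∂ₜu = u × Δu on (ℝ² ∖ {0}) × I if and only if v satisfies ∂ₜv = v × (∂_r²v + r^{−1}∂_r v + r^{−2}R²v) on (0,∞) × I. -/

import Mathlib

noncomputable section
open MeasureTheory Real Set Filter
open scoped RealInnerProductSpace Topology

/-- The plane `ℝ²` with its Euclidean structure. -/
abbrev V2 : Type := EuclideanSpace ℝ (Fin 2)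
/-- The space `ℝ³` with its Euclidean structure. -/
abbrev V3 : Type := EuclideanSpace ℝ (Fin 3)

/-- The point `(a, b) ∈ ℝ²`. -/
def pt2 (a b : ℝ) : V2 := WithLp.toLp 2 ![a, b]

/-- The cross product in `ℝ³`. -/
def cross (u v : V3) : V3 :=
  WithLp.toLp 2 ![u 1 * v 2 - u 2 * v 1, u 2 * v 0 - u 0 * v 2, u 0 * v 1 - u 1 * v 0]

/-- `e^{θR}`: rotation by angle `θ` about the `x₃`-axis. -/
def rot3 (θ : ℝ) (v : V3) : V3 :=
  WithLp.toLp 2 ![Real.cos θ * v 0 - Real.sin θ * v 1, Real.sin θ * v 0 + Real.cos θ * v 1, v 2]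

/-- The generator `R` of horizontal rotations, `Rv = k × v` with `k = (0,0,1)`. -/
def Rgen (v : V3) : V3 := WithLp.toLp 2 ![-(v 1), v 0, 0]

/-- Directional (partial) derivative of a map `ℝ² → ℝ³` in direction `e`. -/
def pd (e : V2) (f : V2 → V3) (x : V2) : V3 := fderiv ℝ f x e

/-- The componentwise Laplacian on `ℝ²`. -/
def lap (f : V2 → V3) (x : V2) : V3 :=
  pd (pt2 1 0) (pd (pt2 1 0) f) x + pd (pt2 0 1) (pd (pt2 0 1) f) x

/-- Squared homogeneous Sobolev seminorm `‖f‖_{Ḣ^k}² = ∫ |∇^k f|²`. -/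
def sobSq (k : ℕ) (f : V2 → V3) : ℝ := ∫ x : V2, ‖iteratedFDeriv ℝ k f x‖ ^ 2

/-- The degree one harmonic map `φ(x) = e^{θR} Q(r)`,
`Q = (h₁, 0, h₃)`, `h₁(r) = 2r/(r²+1)`, `h₃(r) = (r²-1)/(r²+1)`. -/
def phi1 (x : V2) : V3 :=
  WithLp.toLp 2 ![2 * x 0 / (x 0 ^ 2 + x 1 ^ 2 + 1), 2 * x 1 / (x 0 ^ 2 + x 1 ^ 2 + 1),
    (x 0 ^ 2 + x 1 ^ 2 - 1) / (x 0 ^ 2 + x 1 ^ 2 + 1)]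

/-! ### Auxiliary machinery for the proof -/

namespace ER

/-- Radius function on `ℝ²`. -/
def NN (y : V2) : ℝ := Real.sqrt (y 0 ^ 2 + y 1 ^ 2)

def p0 : V2 →L[ℝ] ℝ := EuclideanSpace.proj (𝕜 := ℝ) (0 : Fin 2)
def p1 : V2 →L[ℝ] ℝ := EuclideanSpace.proj (𝕜 := ℝ) (1 : Fin 2)
def dN (y : V2) : V2 →L[ℝ] ℝ := (NN y)⁻¹ • ((y 0) • p0 + (y 1) • p1)

@[simp] lemma p0_apply (z : V2) : p0 z = z 0 := rfl
@[simp] lemma p1_apply (z : V2) : p1 z = z 1 := rfl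
@[simp] lemma pt2_apply0 (a b : ℝ) : (pt2 a b) 0 = a := rfl
@[simp] lemma pt2_apply1 (a b : ℝ) : (pt2 a b) 1 = b := rfl

@[simp] lemma dN_apply (y z : V2) : dN y z = (NN y)⁻¹ * (y 0 * z 0 + y 1 * z 1) := by
  simp [dN, mul_add, mul_comm]

lemma nn_pos {y : V2} (hy : y ≠ 0) : 0 < NN y := by
  have h : y 0 ≠ 0 ∨ y 1 ≠ 0 := by
    by_contra h
    push_neg at h
    exact hy (by ext i; fin_cases i <;> simp [h.1, h.2])
  apply Real.sqrt_pos.2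
  rcases h with h | h
  · positivity
  · positivity

lemma nn_sq (y : V2) : NN y ^ 2 = y 0 ^ 2 + y 1 ^ 2 := by
  have : (0:ℝ) ≤ y 0 ^ 2 + y 1 ^ 2 := by positivity
  simp [NN, Real.sq_sqrt this]

lemma hasFDerivAt_p0 (y : V2) : HasFDerivAt (fun z : V2 => z 0) p0 y := p0.hasFDerivAt
lemma hasFDerivAt_p1 (y : V2) : HasFDerivAt (fun z : V2 => z 1) p1 y := p1.hasFDerivAt

lemma hasFDerivAt_NN {y : V2} (hy : y ≠ 0) : HasFDerivAt NN (dN y) y := by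
  have hq : HasFDerivAt (fun z : V2 => z 0 ^ 2 + z 1 ^ 2)
      ((y 0 • p0 + y 0 • p0) + (y 1 • p1 + y 1 • p1)) y := by
    have := ((hasFDerivAt_p0 y).mul (hasFDerivAt_p0 y)).add
      ((hasFDerivAt_p1 y).mul (hasFDerivAt_p1 y))
    refine this.congr_of_eventuallyEq (Filter.Eventually.of_forall fun z => ?_)
    simp [pow_two]
  have hne : y 0 ^ 2 + y 1 ^ 2 ≠ 0 := by
    have := nn_pos hy
    rw [NN] at this
    intro h
    rw [h] at this
    simp at this
  have hs := (Real.hasDerivAt_sqrt hne).comp_hasFDerivAt y hq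
  refine hs.congr_fderiv ?_
  ext z
  have hnn : NN y ≠ 0 := (nn_pos hy).ne'
  simp only [ContinuousLinearMap.smul_apply, ContinuousLinearMap.add_apply, dN_apply,
    p0_apply, p1_apply, smul_eq_mul]
  rw [show Real.sqrt (y 0 ^ 2 + y 1 ^ 2) = NN y from rfl]
  field_simp
  ring

lemma comp_NN {F : ℝ → V3} {F1 : V3} {y : V2} (hF : HasDerivAt F F1 (NN y)) (hy : y ≠ 0) :
    HasFDerivAt (fun z => F (NN z)) ((dN y).smulRight F1) y := by
  have h := hF.hasFDerivAt.comp y (hasFDerivAt_NN hy)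
  refine h.congr_fderiv ?_
  ext e
  simp

def cc (F G H : ℝ → V3) : V2 → V3 := fun y =>
  (y 0) • F (NN y) + (y 1) • G (NN y) + H (NN y)

def A0 (F F1 G1 H1 : ℝ → V3) : V2 → V3 := fun y =>
  F (NN y) + ((NN y)⁻¹ * (y 0 * y 0)) • F1 (NN y) + ((NN y)⁻¹ * (y 0 * y 1)) • G1 (NN y)
    + ((NN y)⁻¹ * y 0) • H1 (NN y)

def A1 (G F1 G1 H1 : ℝ → V3) : V2 → V3 := fun y =>
  G (NN y) + ((NN y)⁻¹ * (y 1 * y 0)) • F1 (NN y) + ((NN y)⁻¹ * (y 1 * y 1)) • G1 (NN y)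
    + ((NN y)⁻¹ * y 1) • H1 (NN y)

section master
variable (F F1 F2 G G1 G2 H H1 H2 : ℝ → V3)

lemma pd0_cc (hF : ∀ r : ℝ, 0 < r → HasDerivAt F (F1 r) r)
    (hG : ∀ r : ℝ, 0 < r → HasDerivAt G (G1 r) r)
    (hH : ∀ r : ℝ, 0 < r → HasDerivAt H (H1 r) r) {y : V2} (hy : y ≠ 0) :
    pd (pt2 1 0) (cc F G H) y = A0 F F1 G1 H1 y := by
  have hn := nn_pos hy
  have hnne : NN y ≠ 0 := hn.ne'
  have h : HasFDerivAt (cc F G H) _ y :=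
    (((hasFDerivAt_p0 y).smul (comp_NN (hF _ hn) hy)).add
      ((hasFDerivAt_p1 y).smul (comp_NN (hG _ hn) hy))).add (comp_NN (hH _ hn) hy)
  rw [pd, h.fderiv]
  simp only [ContinuousLinearMap.add_apply, ContinuousLinearMap.smul_apply,
    ContinuousLinearMap.smulRight_apply, dN_apply, p0_apply, p1_apply,
    pt2_apply0, pt2_apply1, smul_eq_mul, A0]
  match_scalars <;> ring

lemma pd1_cc (hF : ∀ r : ℝ, 0 < r → HasDerivAt F (F1 r) r)
    (hG : ∀ r : ℝ, 0 < r → HasDerivAt G (G1 r) r)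
    (hH : ∀ r : ℝ, 0 < r → HasDerivAt H (H1 r) r) {y : V2} (hy : y ≠ 0) :
    pd (pt2 0 1) (cc F G H) y = A1 G F1 G1 H1 y := by
  have hn := nn_pos hy
  have hnne : NN y ≠ 0 := hn.ne'
  have h : HasFDerivAt (cc F G H) _ y :=
    (((hasFDerivAt_p0 y).smul (comp_NN (hF _ hn) hy)).add
      ((hasFDerivAt_p1 y).smul (comp_NN (hG _ hn) hy))).add (comp_NN (hH _ hn) hy)
  rw [pd, h.fderiv]
  simp only [ContinuousLinearMap.add_apply, ContinuousLinearMap.smul_apply,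
    ContinuousLinearMap.smulRight_apply, dN_apply, p0_apply, p1_apply,
    pt2_apply0, pt2_apply1, smul_eq_mul, A1]
  match_scalars <;> ring

lemma lap_cc (hF : ∀ r : ℝ, 0 < r → HasDerivAt F (F1 r) r)
    (hF1 : ∀ r : ℝ, 0 < r → HasDerivAt F1 (F2 r) r)
    (hG : ∀ r : ℝ, 0 < r → HasDerivAt G (G1 r) r)
    (hG1 : ∀ r : ℝ, 0 < r → HasDerivAt G1 (G2 r) r)
    (hH : ∀ r : ℝ, 0 < r → HasDerivAt H (H1 r) r)
    (hH1 : ∀ r : ℝ, 0 < r → HasDerivAt H1 (H2 r) r)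
    {x : V2} (hx : x ≠ 0) :
    lap (cc F G H) x =
      (x 0) • (F2 (NN x) + (3 * (NN x)⁻¹) • F1 (NN x))
      + (x 1) • (G2 (NN x) + (3 * (NN x)⁻¹) • G1 (NN x))
      + (H2 (NN x) + (NN x)⁻¹ • H1 (NN x)) := by
  have hn := nn_pos hx
  have hnne : NN x ≠ 0 := hn.ne'
  have hn2 : NN x ^ 2 = x 0 ^ 2 + x 1 ^ 2 := nn_sq x
  have hmem : {y : V2 | y ≠ 0} ∈ 𝓝 x := isOpen_compl_singleton.mem_nhds hx
  have ev0 : pd (pt2 1 0) (cc F G H) =ᶠ[𝓝 x] A0 F F1 G1 H1 := by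
    filter_upwards [hmem] with y hy using pd0_cc F F1 G G1 H H1 hF hG hH hy
  have ev1 : pd (pt2 0 1) (cc F G H) =ᶠ[𝓝 x] A1 G F1 G1 H1 := by
    filter_upwards [hmem] with y hy using pd1_cc F F1 G G1 H H1 hF hG hH hy
  have hinv : HasFDerivAt (fun y : V2 => (NN y)⁻¹) ((-(NN x ^ 2)⁻¹) • dN x) x := by
    have := (hasDerivAt_inv hnne).comp_hasFDerivAt x (hasFDerivAt_NN hx)
    exact this
  have h0 := ((((comp_NN (hF _ hn) hx).add
      ((hinv.mul ((hasFDerivAt_p0 x).mul (hasFDerivAt_p0 x))).smul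
        (comp_NN (hF1 _ hn) hx))).add
      ((hinv.mul ((hasFDerivAt_p0 x).mul (hasFDerivAt_p1 x))).smul
        (comp_NN (hG1 _ hn) hx))).add
      ((hinv.mul (hasFDerivAt_p0 x)).smul (comp_NN (hH1 _ hn) hx)))
  have h1 := ((((comp_NN (hG _ hn) hx).add
      ((hinv.mul ((hasFDerivAt_p1 x).mul (hasFDerivAt_p0 x))).smul
        (comp_NN (hF1 _ hn) hx))).add
      ((hinv.mul ((hasFDerivAt_p1 x).mul (hasFDerivAt_p1 x))).smul
        (comp_NN (hG1 _ hn) hx))).add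
      ((hinv.mul (hasFDerivAt_p1 x)).smul (comp_NN (hH1 _ hn) hx)))
  rw [lap, pd, pd, ev0.fderiv_eq, ev1.fderiv_eq,
    (show fderiv ℝ (A0 F F1 G1 H1) x = _ from h0.fderiv),
    (show fderiv ℝ (A1 G F1 G1 H1) x = _ from h1.fderiv)]
  simp only [ContinuousLinearMap.add_apply, ContinuousLinearMap.smul_apply,
    ContinuousLinearMap.smulRight_apply, ContinuousLinearMap.neg_apply, dN_apply,
    p0_apply, p1_apply, pt2_apply0, pt2_apply1, smul_eq_mul, neg_smul, Pi.mul_apply]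
  match_scalars <;>
    (field_simp
     try left
     first
       | linear_combination (x 0 * NN x ^ 7) * hn2
       | linear_combination (x 1 * NN x ^ 7) * hn2
       | linear_combination (-(x 0)) * hn2
       | linear_combination (-(x 1)) * hn2
       | linear_combination (-1 : ℝ) * hn2
       | linear_combination (x 0) * hn2
       | linear_combination (x 1) * hn2
       | linear_combination hn2)

end master

/-! ### Linear maps on `ℝ³` -/

def PL : V3 →L[ℝ] V3 := LinearMap.toContinuousLinearMap
  { toFun := fun u => WithLp.toLp 2 ![u 0, u 1, 0]
    map_add' := by intro u v; ext i; fin_cases i <;> simp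
    map_smul' := by intro c u; ext i; fin_cases i <;> simp }

def RL : V3 →L[ℝ] V3 := LinearMap.toContinuousLinearMap
  { toFun := fun u => WithLp.toLp 2 ![-(u 1), u 0, 0]
    map_add' := by intro u v; ext i; fin_cases i <;> simp [add_comm]
    map_smul' := by intro c u; ext i; fin_cases i <;> simp [mul_comm] }

def HL : V3 →L[ℝ] V3 := LinearMap.toContinuousLinearMap
  { toFun := fun u => WithLp.toLp 2 ![0, 0, u 2]
    map_add' := by intro u v; ext i; fin_cases i <;> simp
    map_smul' := by intro c u; ext i; fin_cases i <;> simp }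

def rotL (θ : ℝ) : V3 →L[ℝ] V3 := LinearMap.toContinuousLinearMap
  { toFun := rot3 θ
    map_add' := by intro u v; ext i; fin_cases i <;> (simp [rot3]; try ring)
    map_smul' := by intro c u; ext i; fin_cases i <;> (simp [rot3]; try ring) }

@[simp] lemma PL_apply (u : V3) : PL u = WithLp.toLp 2 ![u 0, u 1, 0] := rfl
@[simp] lemma RL_apply (u : V3) : RL u = WithLp.toLp 2 ![-(u 1), u 0, 0] := rfl
@[simp] lemma HL_apply (u : V3) : HL u = WithLp.toLp 2 ![0, 0, u 2] := rfl
@[simp] lemma rotL_apply (θ : ℝ) (u : V3) : rotL θ u = rot3 θ u := rfl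

lemma rot3_zero (u : V3) : rot3 0 u = u := by
  ext i; fin_cases i <;> simp [rot3]

lemma rot3_cross (θ : ℝ) (p q : V3) :
    rot3 θ (cross p q) = cross (rot3 θ p) (rot3 θ q) := by
  have h := Real.sin_sq_add_cos_sq θ
  ext i
  fin_cases i
  · simp [rot3, cross]; ring
  · simp [rot3, cross]; ring
  · simp [rot3, cross]
    linear_combination (p 1 * q 0 - p 0 * q 1) * h

/-! ### one-variable derivative helpers -/

lemma hasDerivAt_term3 (L : V3 →L[ℝ] V3) {w W1 : ℝ → V3} {r : ℝ}
    (h : HasDerivAt w (W1 r) r) :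
    HasDerivAt (fun s => L (w s)) (L (W1 r)) r := by
  have := L.hasFDerivAt.comp_hasDerivAt r h
  simpa [Function.comp_def] using this

lemma hasDerivAt_term1 (L : V3 →L[ℝ] V3) {w W1 : ℝ → V3} {r : ℝ} (hr : 0 < r)
    (h : HasDerivAt w (W1 r) r) :
    HasDerivAt (fun s => s⁻¹ • L (w s)) (r⁻¹ • L (W1 r) + (-(r ^ 2)⁻¹) • L (w r)) r :=
  (hasDerivAt_inv hr.ne').smul (hasDerivAt_term3 L h)

lemma hasDerivAt_term2 (L : V3 →L[ℝ] V3) {w W1 W2 : ℝ → V3} {r : ℝ} (hr : 0 < r)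
    (h1 : HasDerivAt w (W1 r) r) (h2 : HasDerivAt W1 (W2 r) r) :
    HasDerivAt (fun s => s⁻¹ • L (W1 s) + (-(s ^ 2)⁻¹) • L (w s))
      (r⁻¹ • L (W2 r) + (-2 * (r ^ 2)⁻¹) • L (W1 r) + (2 * (r ^ 3)⁻¹) • L (w r)) r := by
  have hA := (hasDerivAt_inv hr.ne').smul (hasDerivAt_term3 L h2)
  have hB0 : HasDerivAt (fun s : ℝ => (s ^ 2)⁻¹) (-(2 * r ^ 1) / (r ^ 2) ^ 2) r :=
    (hasDerivAt_pow 2 r).inv (pow_ne_zero 2 hr.ne')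
  have hB := hB0.neg.smul (hasDerivAt_term3 L h1)
  have hAB := hA.add hB
  refine hAB.congr_deriv ?_
  have hrne : r ≠ 0 := hr.ne'
  simp only [Pi.neg_apply]
  match_scalars <;> (field_simp; try ring)


/-! ### polar coordinates -/

lemma polar {y : V2} (hy : y ≠ 0) :
    ∃ θ : ℝ, y 0 = NN y * Real.cos θ ∧ y 1 = NN y * Real.sin θ := by
  set z : ℂ := ⟨y 0, y 1⟩ with hz
  have hzne : z ≠ 0 := by
    intro h
    apply hy
    ext i
    fin_cases i
    · simpa using congrArg Complex.re h
    · simpa using congrArg Complex.im h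
  have habs : ‖z‖ = NN y := by
    rw [Complex.norm_def, Complex.normSq_apply, NN]
    norm_num [hz, pow_two]
  refine ⟨Complex.arg z, ?_, ?_⟩
  · have := Complex.cos_arg hzne
    rw [habs] at this
    rw [this]
    field_simp [(nn_pos hy).ne']
    rfl
  · have := Complex.sin_arg z
    rw [habs] at this
    rw [this]
    field_simp [(nn_pos hy).ne']
    rfl

/-! ### congruence of the Laplacian -/

lemma lap_congr {f g : V2 → V3} {x : V2} (h : ∀ y : V2, y ≠ 0 → f y = g y) (hx : x ≠ 0) :
    lap f x = lap g x := by
  have hmem : {y : V2 | y ≠ 0} ∈ 𝓝 x := isOpen_compl_singleton.mem_nhds hx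
  have inner : ∀ e : V2, ∀ y : V2, y ≠ 0 → pd e f y = pd e g y := by
    intro e y hy
    have hev : f =ᶠ[𝓝 y] g := by
      filter_upwards [isOpen_compl_singleton.mem_nhds hy] with z hz using h z hz
    rw [pd, pd, hev.fderiv_eq]
  have h0 : pd (pt2 1 0) f =ᶠ[𝓝 x] pd (pt2 1 0) g := by
    filter_upwards [hmem] with y hy using inner _ y hy
  have h1 : pd (pt2 0 1) f =ᶠ[𝓝 x] pd (pt2 0 1) g := by
    filter_upwards [hmem] with y hy using inner _ y hy
  rw [lap, lap, pd, pd, pd, pd, h0.fderiv_eq, h1.fderiv_eq]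

/-! ### algebraic identities -/

lemma rot_eq_cc {y : V2} (hy : y ≠ 0) {θ : ℝ} (h0 : y 0 = NN y * Real.cos θ)
    (h1 : y 1 = NN y * Real.sin θ) (w : ℝ → V3) :
    cc (fun ρ => ρ⁻¹ • PL (w ρ)) (fun ρ => ρ⁻¹ • RL (w ρ)) (fun ρ => HL (w ρ)) y
      = rot3 θ (w (NN y)) := by
  have hnne : NN y ≠ 0 := (nn_pos hy).ne'
  ext i
  fin_cases i <;>
    (simp only [cc, rot3, PL_apply, RL_apply, HL_apply, PiLp.add_apply, PiLp.smul_apply,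
      smul_eq_mul, h0, h1, Matrix.cons_val_zero, Matrix.cons_val_one, Matrix.head_cons,
      Matrix.cons_val_two, Matrix.tail_cons, Fin.zero_eta, Fin.mk_one, Fin.reduceFinMk]
     field_simp
     try ring)

lemma final_alg (n θ : ℝ) (hn : 0 < n) (p q s : V3) :
    (n * Real.cos θ) • ((n⁻¹ • PL s + (-2 * (n ^ 2)⁻¹) • PL q + (2 * (n ^ 3)⁻¹) • PL p)
        + (3 * n⁻¹) • (n⁻¹ • PL q + (-(n ^ 2)⁻¹) • PL p))
    + (n * Real.sin θ) • ((n⁻¹ • RL s + (-2 * (n ^ 2)⁻¹) • RL q + (2 * (n ^ 3)⁻¹) • RL p)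
        + (3 * n⁻¹) • (n⁻¹ • RL q + (-(n ^ 2)⁻¹) • RL p))
    + (HL s + n⁻¹ • HL q)
    = rot3 θ (s + n⁻¹ • q + (n ^ 2)⁻¹ • Rgen (Rgen p)) := by
  have hnne : n ≠ 0 := hn.ne'
  ext i
  fin_cases i <;>
    (simp only [rot3, Rgen, PL_apply, RL_apply, HL_apply, PiLp.add_apply, PiLp.smul_apply,
      smul_eq_mul, Matrix.cons_val_zero, Matrix.cons_val_one, Matrix.head_cons,
      Matrix.cons_val_two, Matrix.tail_cons, Fin.zero_eta, Fin.mk_one, Fin.reduceFinMk]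
     field_simp
     try ring)

end ER

/-- a 1-equivariant map `u(x,t) = e^{θR} v(r,t)` satisfies the Schrödinger map
equation `∂ₜ u = u × Δu` away from the origin if and only if `v` satisfies
`∂ₜ v = v × (∂ᵣ²v + r⁻¹ ∂ᵣ v + r⁻² R² v)`. -/

theorem equivariant_reduction (a b : ℝ) (v : ℝ → ℝ → V3) (u : ℝ → V2 → V3)
    (hv : ContDiffOn ℝ (⊤ : ℕ∞) (fun p : ℝ × ℝ => v p.1 p.2) (Ioo a b ×ˢ Ioi 0))
    (hsph : ∀ t ∈ Ioo a b, ∀ r : ℝ, 0 < r → ‖v t r‖ = 1)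
    (huv : ∀ t ∈ Ioo a b, ∀ θ : ℝ, ∀ r : ℝ, 0 < r →
      u t (pt2 (r * Real.cos θ) (r * Real.sin θ)) = rot3 θ (v t r)) :
    (∀ t ∈ Ioo a b, ∀ x : V2, x ≠ 0 →
        HasDerivAt (fun s => u s x) (cross (u t x) (lap (u t) x)) t) ↔
    (∀ t ∈ Ioo a b, ∀ r : ℝ, 0 < r →
        HasDerivAt (fun s => v s r)
          (cross (v t r)
            (deriv (deriv (v t)) r + r⁻¹ • deriv (v t) r + (r ^ 2)⁻¹ • Rgen (Rgen (v t r)))) t) := by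
  have setup : ∀ t ∈ Ioo a b,
      (∀ ρ : ℝ, 0 < ρ → HasDerivAt (v t) (deriv (v t) ρ) ρ) ∧
      (∀ ρ : ℝ, 0 < ρ → HasDerivAt (deriv (v t)) (deriv (deriv (v t)) ρ) ρ) := by
    intro t ht
    have hw : ContDiffOn ℝ (⊤ : ℕ∞) (v t) (Ioi 0) := by
      have h2 : ContDiffOn ℝ (⊤ : ℕ∞) (fun r : ℝ => ((t, r) : ℝ × ℝ)) (Ioi 0) :=
        (contDiff_const.prodMk contDiff_id).contDiffOn
      exact hv.comp h2 (fun r hr => ⟨ht, hr⟩)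
    have hw' : ContDiffOn ℝ (⊤ : ℕ∞) (deriv (v t)) (Ioi 0) := hw.deriv_of_isOpen isOpen_Ioi (by simp)
    constructor
    · intro ρ hρ
      exact ((hw.differentiableOn (by simp)).differentiableAt (Ioi_mem_nhds hρ)).hasDerivAt
    · intro ρ hρ
      exact ((hw'.differentiableOn (by simp)).differentiableAt (Ioi_mem_nhds hρ)).hasDerivAt
  have hueq : ∀ t ∈ Ioo a b, ∀ y : V2, y ≠ 0 →
      u t y = ER.cc (fun ρ => ρ⁻¹ • ER.PL (v t ρ)) (fun ρ => ρ⁻¹ • ER.RL (v t ρ))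
        (fun ρ => ER.HL (v t ρ)) y := by
    intro t ht y hy
    obtain ⟨θ, h0, h1⟩ := ER.polar hy
    have hpt : pt2 (ER.NN y * Real.cos θ) (ER.NN y * Real.sin θ) = y := by
      ext i
      fin_cases i
      · exact h0.symm
      · exact h1.symm
    have h2 : u t y = rot3 θ (v t (ER.NN y)) := by
      rw [← huv t ht θ (ER.NN y) (ER.nn_pos hy), hpt]
    rw [h2, ← ER.rot_eq_cc hy h0 h1]
  have hlap : ∀ t ∈ Ioo a b, ∀ x : V2, x ≠ 0 → ∀ θ : ℝ,
      x 0 = ER.NN x * Real.cos θ → x 1 = ER.NN x * Real.sin θ →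
      lap (u t) x = rot3 θ (deriv (deriv (v t)) (ER.NN x) + (ER.NN x)⁻¹ • deriv (v t) (ER.NN x)
        + ((ER.NN x) ^ 2)⁻¹ • Rgen (Rgen (v t (ER.NN x)))) := by
    intro t ht x hx θ h0 h1
    obtain ⟨hw1, hw2⟩ := setup t ht
    have hcc := ER.lap_cc
      (fun ρ => ρ⁻¹ • ER.PL (v t ρ))
      (fun ρ => ρ⁻¹ • ER.PL (deriv (v t) ρ) + (-(ρ ^ 2)⁻¹) • ER.PL (v t ρ))
      (fun ρ => ρ⁻¹ • ER.PL (deriv (deriv (v t)) ρ) + (-2 * (ρ ^ 2)⁻¹) • ER.PL (deriv (v t) ρ)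
        + (2 * (ρ ^ 3)⁻¹) • ER.PL (v t ρ))
      (fun ρ => ρ⁻¹ • ER.RL (v t ρ))
      (fun ρ => ρ⁻¹ • ER.RL (deriv (v t) ρ) + (-(ρ ^ 2)⁻¹) • ER.RL (v t ρ))
      (fun ρ => ρ⁻¹ • ER.RL (deriv (deriv (v t)) ρ) + (-2 * (ρ ^ 2)⁻¹) • ER.RL (deriv (v t) ρ)
        + (2 * (ρ ^ 3)⁻¹) • ER.RL (v t ρ))
      (fun ρ => ER.HL (v t ρ)) (fun ρ => ER.HL (deriv (v t) ρ))
      (fun ρ => ER.HL (deriv (deriv (v t)) ρ))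
      (fun ρ hρ => ER.hasDerivAt_term1 ER.PL hρ (hw1 ρ hρ))
      (fun ρ hρ => ER.hasDerivAt_term2 ER.PL hρ (hw1 ρ hρ) (hw2 ρ hρ))
      (fun ρ hρ => ER.hasDerivAt_term1 ER.RL hρ (hw1 ρ hρ))
      (fun ρ hρ => ER.hasDerivAt_term2 ER.RL hρ (hw1 ρ hρ) (hw2 ρ hρ))
      (fun ρ hρ => ER.hasDerivAt_term3 ER.HL (hw1 ρ hρ))
      (fun ρ hρ => ER.hasDerivAt_term3 ER.HL (hw2 ρ hρ))
      hx
    rw [ER.lap_congr (hueq t ht) hx, hcc, h0, h1]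
    exact ER.final_alg (ER.NN x) θ (ER.nn_pos hx) (v t (ER.NN x)) (deriv (v t) (ER.NN x))
      (deriv (deriv (v t)) (ER.NN x))
  constructor
  · intro hu t ht r hr
    set x : V2 := pt2 r 0 with hxdef
    have hx : x ≠ 0 := by
      intro h
      have h0 : x 0 = 0 := by rw [h]; rfl
      rw [hxdef] at h0
      simp at h0
      exact hr.ne' h0
    have hnx : ER.NN x = r := by
      rw [hxdef, ER.NN]
      simp
      exact Real.sqrt_sq hr.le
    have h0 : x 0 = ER.NN x * Real.cos 0 := by rw [hnx, hxdef]; simp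
    have h1 : x 1 = ER.NN x * Real.sin 0 := by rw [hnx, hxdef]; simp
    have hL := hlap t ht x hx 0 h0 h1
    have hU : u t x = v t r := by
      have h2 := huv t ht 0 r hr
      simp only [Real.cos_zero, Real.sin_zero, mul_one, mul_zero] at h2
      rw [hxdef, h2, ER.rot3_zero]
    have hd := hu t ht x hx
    rw [hU, hL, hnx, ER.rot3_zero] at hd
    refine hd.congr_of_eventuallyEq ?_
    filter_upwards [Ioo_mem_nhds ht.1 ht.2] with s hs
    have h2 := huv s hs 0 r hr
    simp only [Real.cos_zero, Real.sin_zero, mul_one, mul_zero] at h2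
    rw [hxdef, h2, ER.rot3_zero]
  · intro hV t ht x hx
    obtain ⟨θ, h0, h1⟩ := ER.polar hx
    have hr := ER.nn_pos hx
    have hpt : pt2 (ER.NN x * Real.cos θ) (ER.NN x * Real.sin θ) = x := by
      ext i
      fin_cases i
      · exact h0.symm
      · exact h1.symm
    have hd := hV t ht (ER.NN x) hr
    have hrot := (ER.rotL θ).hasFDerivAt.comp_hasDerivAt t hd
    simp only [Function.comp_def, ER.rotL_apply] at hrot
    have heq : (fun s => u s x) =ᶠ[𝓝 t] (fun s => rot3 θ (v s (ER.NN x))) := by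
      filter_upwards [Ioo_mem_nhds ht.1 ht.2] with s hs
      have h2 := huv s hs θ (ER.NN x) hr
      rw [hpt] at h2
      rw [h2]
    have hgoal := hrot.congr_of_eventuallyEq heq
    have hLx := hlap t ht x hx θ h0 h1
    have hux : u t x = rot3 θ (v t (ER.NN x)) := by
      have h2 := huv t ht θ (ER.NN x) hr
      rw [hpt] at h2
      exact h2
    rw [hux, hLx, ← ER.rot3_cross]
    exact hgoal
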